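/- arXiv:2103.11536 — 10 statements merged into one kernel-verified Lean document; each statement's English description precedes it below -/
import Mathlib

section
/- The following are equivalent: (LHS) for every j ∈ {2, 0, -2} and every ε ∈ {R, L} there exists κ ∈ ℂ with κ ≠ 0 such that κ⁻¹·Ṽ^{(j,ε)} is unitary; (RHS) all three of the following hold: (I) |a| = |b|; (II) |β_R| = |β_L| = 1/√2; (III) at least one of: (i) there exists j₀ ∈ {2, 0, -2} such that α_{2 j₀} = α_{(-2) j₀} = 0, α_{0 j} = 0 for both j ≠ j₀, and |α_{2 j}| = |α_{(-2) j}| for both j ≠ j₀; or (ii) for every k ∈ {2, 0, -2}, |α_{2 k}| = |α_{(-2) k}| and the product α_{2 k}·α_{(-2) k}·conj(α_{0 k})² is a nonpositive real number (equivalently, when the entries are nonzero, arg α_{2 k} + arg α_{(-2) k} − 2·arg α_{0 k} is an odd multiple of π). -/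
/-- Bob's (unnormalized) post-measurement matrix `Ṽ^{(j,ε)}` in the quantum-walk
teleportation scheme.  Rows and columns of `α = H̃₂` are indexed by `{2, 0, -2}` in this
order (so index `0 ↦ 2`, `1 ↦ 0`, `2 ↦ -2`); `ε : Fin 2` with `0 ↦ R`, `1 ↦ L`, and
`η_ε` is the `ε`-th column of `H₁`.  The first row of `Ṽ^{(j,ε)}` is
`(η_ε)* · diag(conj α_{2j}·β_R, conj α_{0j}·β_R) · C₁` and the second row is
`(η_ε)* · diag(conj α_{0j}·β_L, conj α_{(-2)j}·β_L) · C₁`. -/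
noncomputable def Vtilde (H1 : Matrix (Fin 2) (Fin 2) ℂ) (α : Matrix (Fin 3) (Fin 3) ℂ)
    (βR βL : ℂ) (C1 : Matrix (Fin 2) (Fin 2) ℂ) (j : Fin 3) (ε : Fin 2) :
    Matrix (Fin 2) (Fin 2) ℂ :=
  Matrix.of
    ![Matrix.vecMul (star fun i => H1 i ε)
        (Matrix.diagonal ![(starRingEnd ℂ) (α 0 j) * βR, (starRingEnd ℂ) (α 1 j) * βR] * C1),
      Matrix.vecMul (star fun i => H1 i ε)
        (Matrix.diagonal ![(starRingEnd ℂ) (α 1 j) * βL, (starRingEnd ℂ) (α 2 j) * βL] * C1)]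

/-!
Because `C₁` is unitary, `Ṽ^{(j,ε)}` is a nonzero multiple of a unitary iff the matrix in front
of `C₁` has orthogonal rows of equal positive length. With `t = |a|²` the moduli `|H₁ᵢₖ|²` form
the matrix `[[t, 1 - t], [1 - t, t]]`. Adding the length equations over `ε` and over `j`, and using
that the rows of `H̃₂` are unit vectors, gives `|β_R|² = |β_L|² = 1/2`, and then
`|α_{2k}| = |α_{-2,k}|`. With `z = conj α_{2k} α_{0k}` and `w = conj α_{0k} α_{-2,k}` the
orthogonality conditions read `t z + (1 - t) w = 0 = (1 - t) z + t w`. For `t ≠ 1/2` they force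
`z = 0`, while the length equations force all three entries of the column `2` of `H̃₂` to have
modulus `1/√3`, which is absurd. Hence `t = 1/2` and `z + w = 0`; as `|z| = |w|`, this says exactly that
`conj z · w = α_{2k} α_{-2,k} conj(α_{0k})²` is a nonpositive real. Pattern (i) is a special
case of (ii).
-/

open Complex Matrix ComplexConjugate

namespace Matrix

variable {n : Type*} [Fintype n] [DecidableEq n]

theorem exists_ne_zero_inv_smul_mem_unitaryGroup_iff (V : Matrix n n ℂ) :
    (∃ κ : ℂ, κ ≠ 0 ∧ κ⁻¹ • V ∈ unitaryGroup n ℂ) ↔ ∃ r : ℝ, 0 < r ∧ V * Vᴴ = (r : ℂ) • 1 := by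
  have key : ∀ κ : ℂ, κ ≠ 0 →
      (κ⁻¹ • V ∈ unitaryGroup n ℂ ↔ V * Vᴴ = ((‖κ‖ ^ 2 : ℝ) : ℂ) • 1) := by
    intro κ hκ
    have hκ' : ((‖κ‖ ^ 2 : ℝ) : ℂ) ≠ 0 := by simpa using hκ
    rw [mem_unitaryGroup_iff, star_eq_conjTranspose, conjTranspose_smul, smul_mul_smul_comm,
      star_def, mul_conj', norm_inv, ofReal_inv, inv_pow, ← ofReal_pow, inv_smul_eq_iff₀ hκ']
  constructor
  · rintro ⟨κ, hκ, hV⟩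
    exact ⟨‖κ‖ ^ 2, by positivity, (key κ hκ).1 hV⟩
  · rintro ⟨r, hr, hV⟩
    have hκ : ((Real.sqrt r : ℝ) : ℂ) ≠ 0 := ofReal_ne_zero.2 (Real.sqrt_ne_zero'.2 hr)
    refine ⟨Real.sqrt r, hκ, (key _ hκ).2 ?_⟩
    rwa [Complex.norm_real, Real.norm_of_nonneg (Real.sqrt_nonneg r), Real.sq_sqrt hr.le]

theorem mul_mul_conjTranspose_of_mem_unitaryGroup (M : Matrix n n ℂ) {C : Matrix n n ℂ}
    (hC : C ∈ unitaryGroup n ℂ) : M * C * (M * C)ᴴ = M * Mᴴ := by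
  rw [conjTranspose_mul, Matrix.mul_assoc, ← Matrix.mul_assoc C, ← star_eq_conjTranspose,
    mem_unitaryGroup_iff.1 hC, Matrix.one_mul]

theorem sum_norm_sq_row_of_mem_unitaryGroup {U : Matrix n n ℂ} (hU : U ∈ unitaryGroup n ℂ)
    (i : n) : ∑ k, ‖U i k‖ ^ 2 = 1 := by
  have h := congrFun (congrFun (mem_unitaryGroup_iff.1 hU) i) i
  simp only [mul_apply, star_apply, one_apply_eq, RCLike.star_def, mul_conj'] at h
  exact_mod_cast h

theorem sum_norm_sq_col_of_mem_unitaryGroup {U : Matrix n n ℂ} (hU : U ∈ unitaryGroup n ℂ)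
    (k : n) : ∑ i, ‖U i k‖ ^ 2 = 1 := by
  have h := congrFun (congrFun (mem_unitaryGroup_iff'.1 hU) k) k
  simp only [mul_apply, star_apply, one_apply_eq, RCLike.star_def, conj_mul'] at h
  exact_mod_cast h

theorem norm_sq_apply_of_mem_unitaryGroup_fin_two {U : Matrix (Fin 2) (Fin 2) ℂ}
    (hU : U ∈ unitaryGroup (Fin 2) ℂ) :
    ‖U 0 1‖ ^ 2 = 1 - ‖U 0 0‖ ^ 2 ∧ ‖U 1 0‖ ^ 2 = 1 - ‖U 0 0‖ ^ 2 ∧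
      ‖U 1 1‖ ^ 2 = ‖U 0 0‖ ^ 2 := by
  have hrow := sum_norm_sq_row_of_mem_unitaryGroup hU
  have hcol := sum_norm_sq_col_of_mem_unitaryGroup hU
  simp only [Fin.sum_univ_two] at hrow hcol
  have := hrow 0; have := hcol 0; have := hcol 1
  refine ⟨?_, ?_, ?_⟩ <;> linarith

theorem fin_two_of_eq_ofReal_smul_one_iff (a b r : ℝ) (y : ℂ) :
    !![(a : ℂ), y; conj y, (b : ℂ)] = (r : ℂ) • 1 ↔ a = r ∧ b = r ∧ y = 0 := by
  rw [← Matrix.ext_iff]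
  simp [Fin.forall_fin_two]
  tauto

end Matrix

theorem Complex.add_eq_zero_iff_of_norm_eq {z w : ℂ} (h : ‖z‖ = ‖w‖) :
    z + w = 0 ↔ (conj z * w).im = 0 ∧ (conj z * w).re ≤ 0 := by
  constructor
  · intro hzw
    rw [eq_neg_of_add_eq_zero_right hzw, mul_neg, conj_mul']
    norm_cast
    simp
  · rintro ⟨him, hre⟩
    have hre' : (conj z * w).re = -‖z‖ ^ 2 := by
      rw [← neg_neg (conj z * w).re, ← abs_of_nonpos hre, abs_re_eq_norm.2 him, norm_mul,
        norm_conj, ← h, sq]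
    have hsq : ‖z + w‖ ^ 2 = 0 := by
      rw [← normSq_eq_norm_sq, normSq_add, ← conj_re, map_mul, conj_conj, mul_comm, hre',
        normSq_eq_norm_sq, normSq_eq_norm_sq, ← h]
      ring
    simpa using hsq

def vtildeCore (η : Fin 2 → ℂ) (x : Fin 3 → ℂ) (βR βL : ℂ) : Matrix (Fin 2) (Fin 2) ℂ :=
  !![conj (η 0) * conj (x 0) * βR, conj (η 1) * conj (x 1) * βR;
    conj (η 0) * conj (x 1) * βL, conj (η 1) * conj (x 2) * βL]

theorem Vtilde_eq_vtildeCore_mul (H1 : Matrix (Fin 2) (Fin 2) ℂ) (α : Matrix (Fin 3) (Fin 3) ℂ)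
    (βR βL : ℂ) (C1 : Matrix (Fin 2) (Fin 2) ℂ) (j : Fin 3) (ε : Fin 2) :
    Vtilde H1 α βR βL C1 j ε = vtildeCore (fun i => H1 i ε) (fun i => α i j) βR βL * C1 := by
  ext i k
  fin_cases i <;> simp [Vtilde, vtildeCore, vecMul, mul_apply, dotProduct, Fin.sum_univ_two] <;>
    ring

theorem vtildeCore_mul_conjTranspose (η : Fin 2 → ℂ) (x : Fin 3 → ℂ) (βR βL : ℂ) :
    vtildeCore η x βR βL * (vtildeCore η x βR βL)ᴴ =
      !![((‖βR‖ ^ 2 * (‖η 0‖ ^ 2 * ‖x 0‖ ^ 2 + ‖η 1‖ ^ 2 * ‖x 1‖ ^ 2) : ℝ) : ℂ),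
          βR * conj βL * (‖η 0‖ ^ 2 * (conj (x 0) * x 1) + ‖η 1‖ ^ 2 * (conj (x 1) * x 2));
        conj (βR * conj βL * (‖η 0‖ ^ 2 * (conj (x 0) * x 1) + ‖η 1‖ ^ 2 * (conj (x 1) * x 2))),
          ((‖βL‖ ^ 2 * (‖η 0‖ ^ 2 * ‖x 1‖ ^ 2 + ‖η 1‖ ^ 2 * ‖x 2‖ ^ 2) : ℝ) : ℂ)] := by
  ext i k
  fin_cases i <;> fin_cases k <;>
    simp [vtildeCore, mul_apply, Fin.sum_univ_two, ← conj_mul'] <;> ring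

/-- Orthogonality and equal positive length of the rows of `vtildeCore η x βR βL`, written with
`p = ‖η 0‖ ^ 2` and `q = ‖η 1‖ ^ 2`. -/
def TeleportCondition (p q : ℝ) (x : Fin 3 → ℂ) (βR βL : ℂ) : Prop :=
  ‖βR‖ ^ 2 * (p * ‖x 0‖ ^ 2 + q * ‖x 1‖ ^ 2) = ‖βL‖ ^ 2 * (p * ‖x 1‖ ^ 2 + q * ‖x 2‖ ^ 2) ∧
    0 < ‖βR‖ ^ 2 * (p * ‖x 0‖ ^ 2 + q * ‖x 1‖ ^ 2) ∧
    βR * conj βL * (p * (conj (x 0) * x 1) + q * (conj (x 1) * x 2)) = 0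

theorem exists_inv_smul_Vtilde_mem_unitaryGroup_iff {C1 : Matrix (Fin 2) (Fin 2) ℂ}
    (hC1 : C1 ∈ unitaryGroup (Fin 2) ℂ) (H1 : Matrix (Fin 2) (Fin 2) ℂ)
    (α : Matrix (Fin 3) (Fin 3) ℂ) (βR βL : ℂ) (j : Fin 3) (ε : Fin 2) :
    (∃ κ : ℂ, κ ≠ 0 ∧ κ⁻¹ • Vtilde H1 α βR βL C1 j ε ∈ unitaryGroup (Fin 2) ℂ) ↔
      TeleportCondition (‖H1 0 ε‖ ^ 2) (‖H1 1 ε‖ ^ 2) (fun i => α i j) βR βL := by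
  simp only [exists_ne_zero_inv_smul_mem_unitaryGroup_iff, Vtilde_eq_vtildeCore_mul,
    mul_mul_conjTranspose_of_mem_unitaryGroup _ hC1, vtildeCore_mul_conjTranspose,
    fin_two_of_eq_ofReal_smul_one_iff, TeleportCondition, ofReal_pow]
  constructor
  · rintro ⟨r, hr, ha, hb, hy⟩
    exact ⟨ha.trans hb.symm, ha ▸ hr, hy⟩
  · rintro ⟨hab, ha, hy⟩
    exact ⟨_, ha, rfl, hab.symm, hy⟩

section Conditions

variable {βR βL : ℂ} {x : Fin 3 → ℂ} {t : ℝ}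

theorem TeleportCondition.balance (h0 : TeleportCondition t (1 - t) x βR βL)
    (h1 : TeleportCondition (1 - t) t x βR βL) :
    ‖βR‖ ^ 2 * (‖x 0‖ ^ 2 + ‖x 1‖ ^ 2) = ‖βL‖ ^ 2 * (‖x 1‖ ^ 2 + ‖x 2‖ ^ 2) := by
  linear_combination h0.1 + h1.1

theorem norm_sq_eq_half_of_balance {α : Matrix (Fin 3) (Fin 3) ℂ}
    (hα : α ∈ unitaryGroup (Fin 3) ℂ) (hβ : ‖βR‖ ^ 2 + ‖βL‖ ^ 2 = 1)
    (h : ∀ j, ‖βR‖ ^ 2 * (‖α 0 j‖ ^ 2 + ‖α 1 j‖ ^ 2) = ‖βL‖ ^ 2 * (‖α 1 j‖ ^ 2 + ‖α 2 j‖ ^ 2)) :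
    ‖βR‖ ^ 2 = 1 / 2 ∧ ‖βL‖ ^ 2 = 1 / 2 := by
  have hrow := sum_norm_sq_row_of_mem_unitaryGroup hα
  simp only [Fin.sum_univ_three] at hrow
  have hRL : ‖βR‖ ^ 2 = ‖βL‖ ^ 2 := by
    linear_combination (h 0 + h 1 + h 2 - ‖βR‖ ^ 2 * hrow 0 - (‖βR‖ ^ 2 - ‖βL‖ ^ 2) * hrow 1
      + ‖βL‖ ^ 2 * hrow 2) / 2
  constructor <;> linarith

theorem TeleportCondition.of_norm_sq_eq_half (h0 : TeleportCondition t (1 - t) x βR βL)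
    (h1 : TeleportCondition (1 - t) t x βR βL) (hR : ‖βR‖ ^ 2 = 1 / 2) (hL : ‖βL‖ ^ 2 = 1 / 2) :
    ‖x 0‖ = ‖x 2‖ ∧ conj (x 0) * x 1 + conj (x 1) * x 2 = 0 ∧
      (t = 1 / 2 ∨ ‖x 0‖ = ‖x 1‖ ∧ conj (x 0) * x 1 = 0) := by
  have hβ : βR * conj βL ≠ 0 :=
    mul_ne_zero (by rintro rfl; norm_num at hR) ((map_ne_zero _).2 (by rintro rfl; norm_num at hL))
  obtain ⟨d0, -, o0⟩ := h0
  obtain ⟨d1, -, o1⟩ := h1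
  replace o0 := (mul_eq_zero.1 o0).resolve_left hβ
  replace o1 := (mul_eq_zero.1 o1).resolve_left hβ
  push_cast at o0 o1
  rw [hR, hL] at d0 d1
  have h02 : ‖x 0‖ ^ 2 = ‖x 2‖ ^ 2 := by linear_combination 2 * (d0 + d1)
  refine ⟨(pow_left_inj₀ (norm_nonneg _) (norm_nonneg _) two_ne_zero).1 h02,
    by linear_combination o0 + o1, or_iff_not_imp_left.2 fun ht => ?_⟩
  have ht' : (2 * t - 1 : ℝ) ≠ 0 := fun h => ht (by linarith)
  have h01 : (2 * t - 1) * (‖x 0‖ ^ 2 - ‖x 1‖ ^ 2) = 0 := by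
    linear_combination d0 - d1 + (t - 1 / 2) * h02
  have hz : ((2 * t - 1 : ℝ) : ℂ) * (conj (x 0) * x 1) = 0 := by
    push_cast
    linear_combination (o0 - o1 + (2 * t - 1) * (o0 + o1)) / 2
  refine ⟨(pow_left_inj₀ (norm_nonneg _) (norm_nonneg _) two_ne_zero).1 ?_,
    (mul_eq_zero.1 hz).resolve_left (ofReal_ne_zero.2 ht')⟩
  linarith [(mul_eq_zero.1 h01).resolve_left ht']

theorem TeleportCondition.of_balanced (hR : ‖βR‖ ^ 2 = 1 / 2) (hL : ‖βL‖ ^ 2 = 1 / 2)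
    (h02 : ‖x 0‖ = ‖x 2‖) (hzw : conj (x 0) * x 1 + conj (x 1) * x 2 = 0)
    (hx : ‖x 0‖ ^ 2 + ‖x 1‖ ^ 2 + ‖x 2‖ ^ 2 = 1) :
    TeleportCondition (1 / 2) (1 / 2) x βR βL := by
  refine ⟨by rw [hR, hL, h02]; ring, ?_, by push_cast; linear_combination βR * conj βL / 2 * hzw⟩
  rw [hR]
  rw [h02] at hx ⊢
  linarith [sq_nonneg ‖x 1‖, sq_nonneg ‖x 2‖]

end Conditions

theorem forall_teleportCondition_iff {H1 : Matrix (Fin 2) (Fin 2) ℂ}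
    (hH1 : H1 ∈ unitaryGroup (Fin 2) ℂ) {α : Matrix (Fin 3) (Fin 3) ℂ}
    (hα : α ∈ unitaryGroup (Fin 3) ℂ) {βR βL : ℂ} (hβ : ‖βR‖ ^ 2 + ‖βL‖ ^ 2 = 1) :
    (∀ j ε, TeleportCondition (‖H1 0 ε‖ ^ 2) (‖H1 1 ε‖ ^ 2) (fun i => α i j) βR βL) ↔
      ‖H1 0 0‖ ^ 2 = 1 / 2 ∧ (‖βR‖ ^ 2 = 1 / 2 ∧ ‖βL‖ ^ 2 = 1 / 2) ∧
        ∀ k, ‖α 0 k‖ = ‖α 2 k‖ ∧ conj (α 0 k) * α 1 k + conj (α 1 k) * α 2 k = 0 := by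
  obtain ⟨h01, h10, h11⟩ := norm_sq_apply_of_mem_unitaryGroup_fin_two hH1
  have hcol j : ‖α 0 j‖ ^ 2 + ‖α 1 j‖ ^ 2 + ‖α 2 j‖ ^ 2 = 1 := by
    simpa [Fin.sum_univ_three] using sum_norm_sq_col_of_mem_unitaryGroup hα j
  constructor
  · intro h
    have h0 j : TeleportCondition (‖H1 0 0‖ ^ 2) (1 - ‖H1 0 0‖ ^ 2) (fun i => α i j) βR βL := by
      simpa [h10] using h j 0
    have h1 j : TeleportCondition (1 - ‖H1 0 0‖ ^ 2) (‖H1 0 0‖ ^ 2) (fun i => α i j) βR βL := by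
      simpa [h01, h11] using h j 1
    obtain ⟨hR, hL⟩ := norm_sq_eq_half_of_balance hα hβ fun j => (h0 j).balance (h1 j)
    have hα' j := (h0 j).of_norm_sq_eq_half (h1 j) hR hL
    refine ⟨?_, ⟨hR, hL⟩, fun k => ⟨(hα' k).1, (hα' k).2.1⟩⟩
    obtain ⟨h02, -, ht | ⟨hx01, hz⟩⟩ := hα' 0
    · exact ht
    have h00 : α 0 0 ≠ 0 := by
      intro h
      have := hcol 0
      simp only [h, ← h02, ← hx01, norm_zero] at this
      norm_num at this
    have h10 : α 1 0 ≠ 0 := norm_ne_zero_iff.1 (hx01 ▸ norm_ne_zero_iff.2 h00)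
    exact absurd hz (mul_ne_zero ((map_ne_zero _).2 h00) h10)
  · rintro ⟨ht, ⟨hR, hL⟩, hα'⟩ j ε
    have hε : ‖H1 0 ε‖ ^ 2 = 1 / 2 ∧ ‖H1 1 ε‖ ^ 2 = 1 / 2 := by
      fin_cases ε <;> simp [h01, h10, h11, ht] <;> norm_num
    rw [hε.1, hε.2]
    exact TeleportCondition.of_balanced hR hL (hα' j).1 (hα' j).2 (hcol j)

theorem norm_eq_norm_iff_norm_sq_eq_half_of_mem_unitaryGroup {U : Matrix (Fin 2) (Fin 2) ℂ}
    (hU : U ∈ unitaryGroup (Fin 2) ℂ) : ‖U 0 0‖ = ‖U 0 1‖ ↔ ‖U 0 0‖ ^ 2 = 1 / 2 := by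
  rw [← pow_left_inj₀ (norm_nonneg _) (norm_nonneg _) two_ne_zero,
    (norm_sq_apply_of_mem_unitaryGroup_fin_two hU).1]
  constructor <;> intro <;> linarith

theorem norm_eq_one_div_sqrt_two_iff {E : Type*} [SeminormedAddGroup E] (z : E) :
    ‖z‖ = 1 / Real.sqrt 2 ↔ ‖z‖ ^ 2 = 1 / 2 := by
  rw [← pow_left_inj₀ (norm_nonneg _) (by positivity) two_ne_zero, div_pow,
    Real.sq_sqrt zero_le_two, one_pow]

theorem zero_pattern_or_iff (α : Matrix (Fin 3) (Fin 3) ℂ) :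
    ((∃ j₀ : Fin 3, α 0 j₀ = 0 ∧ α 2 j₀ = 0 ∧
          (∀ j : Fin 3, j ≠ j₀ → α 1 j = 0) ∧
          (∀ j : Fin 3, j ≠ j₀ → ‖α 0 j‖ = ‖α 2 j‖)) ∨
        (∀ k : Fin 3, ‖α 0 k‖ = ‖α 2 k‖ ∧
          (α 0 k * α 2 k * (starRingEnd ℂ (α 1 k)) ^ 2).im = 0 ∧
          (α 0 k * α 2 k * (starRingEnd ℂ (α 1 k)) ^ 2).re ≤ 0)) ↔
      ∀ k, ‖α 0 k‖ = ‖α 2 k‖ ∧ conj (α 0 k) * α 1 k + conj (α 1 k) * α 2 k = 0 := by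
  have hprod k : α 0 k * α 2 k * conj (α 1 k) ^ 2
      = conj (conj (α 0 k) * α 1 k) * (conj (α 1 k) * α 2 k) := by
    simp only [map_mul, conj_conj]; ring
  rw [or_iff_right_of_imp]
  · refine forall_congr' fun k => and_congr_right fun h02 => ?_
    rw [hprod, add_eq_zero_iff_of_norm_eq]
    simp only [norm_mul, norm_conj, h02, mul_comm]
  · rintro ⟨j₀, h0, h2, h1, h02⟩ k
    by_cases hk : k = j₀
    · subst hk; simp [h0, h2]
    · simp [h1 k hk, h02 k hk]

/-- The teleportation is accomplished (each `Ṽ^{(j,ε)}` is a nonzero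
scalar multiple of a unitary) iff (I) `|a| = |b|`, (II) `|β_R| = |β_L| = 1/√2`, and
(III) `H̃₂` has the special zero pattern (i), or (ii) for every column `k`,
`|α_{2k}| = |α_{(-2)k}|` and `α_{2k}·α_{(-2)k}·conj(α_{0k})²` is a nonpositive real. -/
theorem teleportation_accomplished_iff (H1 : Matrix (Fin 2) (Fin 2) ℂ)
    (hH1 : H1 ∈ Matrix.unitaryGroup (Fin 2) ℂ)
    (α : Matrix (Fin 3) (Fin 3) ℂ) (hα : α ∈ Matrix.unitaryGroup (Fin 3) ℂ)
    (βR βL : ℂ) (hβ : ‖βR‖ ^ 2 + ‖βL‖ ^ 2 = 1)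
    (C1 : Matrix (Fin 2) (Fin 2) ℂ) (hC1 : C1 ∈ Matrix.unitaryGroup (Fin 2) ℂ) :
    (∀ (j : Fin 3) (ε : Fin 2), ∃ κ : ℂ, κ ≠ 0 ∧
        κ⁻¹ • Vtilde H1 α βR βL C1 j ε ∈ Matrix.unitaryGroup (Fin 2) ℂ) ↔
    (‖H1 0 0‖ = ‖H1 0 1‖ ∧
      (‖βR‖ = 1 / Real.sqrt 2 ∧ ‖βL‖ = 1 / Real.sqrt 2) ∧
      ((∃ j₀ : Fin 3, α 0 j₀ = 0 ∧ α 2 j₀ = 0 ∧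
          (∀ j : Fin 3, j ≠ j₀ → α 1 j = 0) ∧
          (∀ j : Fin 3, j ≠ j₀ → ‖α 0 j‖ = ‖α 2 j‖)) ∨
        (∀ k : Fin 3, ‖α 0 k‖ = ‖α 2 k‖ ∧
          (α 0 k * α 2 k * (starRingEnd ℂ (α 1 k)) ^ 2).im = 0 ∧
          (α 0 k * α 2 k * (starRingEnd ℂ (α 1 k)) ^ 2).re ≤ 0))) := by
  simp only [exists_inv_smul_Vtilde_mem_unitaryGroup_iff hC1,
    norm_eq_norm_iff_norm_sq_eq_half_of_mem_unitaryGroup hH1, norm_eq_one_div_sqrt_two_iff,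
    zero_pattern_or_iff]
  exact forall_teleportCondition_iff hH1 hα hβ
end

section
/- Let H₁ = !![a, b; c, d] be a 2×2 unitary complex matrix with columns η_R = (a, c)ᵀ and η_L = (b, d)ᵀ, and let A, B be real numbers with (A, B) ≠ (0, 0). Then there exist λ, λ' ∈ ℂ with diag(A, B)·η_R = λ·η_L and diag(A, B)·η_L = λ'·η_R if and only if A + B = 0 and |a| = |b|. -/
/-!
The columns `η_R`, `η_L` of `H₁` form an orthonormal basis of `ℂ²`, so `diag(A, B) η_R` is a
multiple of `η_L` iff it is orthogonal to `η_R`, i.e. iff `A|a|² + B|c|² = 0`; likewise for `η_L`.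
Unitarity gives `|c| = |b|` and `|d| = |a|`, so the two conditions become
`A|a|² + B|b|² = 0 = A|b|² + B|a|²`. Their sum is `(A + B)(|a|² + |b|²) = 0` with
`|a|² + |b|² = 1`, and once `B = -A ≠ 0` either one forces `|a|² = |b|²`.
-/

open Matrix Complex ComplexConjugate

namespace Matrix

variable {a b c d : ℂ}

theorem mem_unitaryGroup_fin_two_iff :
    !![a, b; c, d] ∈ unitaryGroup (Fin 2) ℂ ↔
      a * conj a + b * conj b = 1 ∧ a * conj c + b * conj d = 0 ∧ c * conj c + d * conj d = 1 := by
  rw [mem_unitaryGroup_iff, star_eq_conjTranspose, ← Matrix.ext_iff]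
  simp only [Fin.forall_fin_two, mul_apply, Fin.sum_univ_two, conjTranspose_apply, of_apply,
    cons_val', cons_val_zero, cons_val_one, cons_val_fin_one, RCLike.star_def, one_apply_eq,
    one_apply_ne zero_ne_one, one_apply_ne one_ne_zero]
  constructor
  · rintro ⟨⟨h00, h01⟩, -, h11⟩
    exact ⟨h00, h01, h11⟩
  · rintro ⟨h00, h01, h11⟩
    refine ⟨⟨h00, h01⟩, ?_, h11⟩
    simpa [mul_comm] using congrArg conj h01

theorem mem_unitaryGroup_fin_two_iff' :
    !![a, b; c, d] ∈ unitaryGroup (Fin 2) ℂ ↔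
      conj a * a + conj c * c = 1 ∧ conj a * b + conj c * d = 0 ∧ conj b * b + conj d * d = 1 := by
  have hstar : star !![a, b; c, d] = !![conj a, conj c; conj b, conj d] := by
    ext i j; fin_cases i <;> fin_cases j <;> rfl
  rw [← Unitary.star_mem_iff, hstar, mem_unitaryGroup_fin_two_iff]
  simp only [conj_conj]

theorem swap_columns_mem_unitaryGroup (hU : !![a, b; c, d] ∈ unitaryGroup (Fin 2) ℂ) :
    !![b, a; d, c] ∈ unitaryGroup (Fin 2) ℂ := by
  obtain ⟨h00, h01, h11⟩ := mem_unitaryGroup_fin_two_iff.1 hU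
  exact mem_unitaryGroup_fin_two_iff.2
    ⟨by rwa [add_comm], by rwa [add_comm], by rwa [add_comm]⟩

theorem normSq_eq_of_mem_unitaryGroup_fin_two (hU : !![a, b; c, d] ∈ unitaryGroup (Fin 2) ℂ) :
    normSq c = normSq b ∧ normSq d = normSq a := by
  obtain ⟨ha, -, hc⟩ := mem_unitaryGroup_fin_two_iff.1 hU
  obtain ⟨ha', -, -⟩ := mem_unitaryGroup_fin_two_iff'.1 hU
  simp only [mul_conj, ← normSq_eq_conj_mul_self] at ha hc ha'
  constructor
  · exact_mod_cast (by linear_combination ha' - ha : (normSq c : ℂ) = normSq b)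
  · exact_mod_cast (by linear_combination hc - ha' : (normSq d : ℂ) = normSq a)

theorem exists_smul_eq_iff_star_dotProduct_eq_zero
    (hU : !![a, b; c, d] ∈ unitaryGroup (Fin 2) ℂ) (x : Fin 2 → ℂ) :
    (∃ l : ℂ, x = l • ![b, d]) ↔ star ![a, c] ⬝ᵥ x = 0 := by
  obtain ⟨haa, hac, hcc⟩ := mem_unitaryGroup_fin_two_iff.1 hU
  obtain ⟨-, hab, -⟩ := mem_unitaryGroup_fin_two_iff'.1 hU
  have hca : c * conj a + d * conj b = 0 := by simpa [mul_comm] using congrArg conj hac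
  simp only [dotProduct, Fin.sum_univ_two, Pi.star_apply, cons_val_zero, cons_val_one,
    cons_val_fin_one, RCLike.star_def]
  constructor
  · rintro ⟨l, rfl⟩
    simp only [Pi.smul_apply, cons_val_zero, cons_val_one, cons_val_fin_one, smul_eq_mul]
    linear_combination l * hab
  · intro hx
    refine ⟨conj b * x 0 + conj d * x 1, ?_⟩
    ext i
    fin_cases i
    · change x 0 = (conj b * x 0 + conj d * x 1) * b
      linear_combination -(x 0 * haa) - x 1 * hac + a * hx
    · change x 1 = (conj b * x 0 + conj d * x 1) * d
      linear_combination -(x 0 * hca) - x 1 * hcc + c * hx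

theorem star_dotProduct_diagonal_mulVec_fin_two (A B : ℝ) (a c : ℂ) :
    star ![a, c] ⬝ᵥ (diagonal ![(A : ℂ), (B : ℂ)] *ᵥ ![a, c]) =
      (A * normSq a + B * normSq c : ℝ) := by
  simp only [dotProduct, mulVec, diagonal, of_apply, ite_mul, zero_mul, Finset.sum_ite_eq,
    Finset.mem_univ, if_true, Fin.sum_univ_two, Pi.star_apply, RCLike.star_def, cons_val_zero,
    cons_val_one, cons_val_fin_one, ofReal_add, ofReal_mul, normSq_eq_conj_mul_self]
  ring

end Matrix

theorem mul_add_mul_eq_zero_and_mul_add_mul_eq_zero_iff {A B p q : ℝ} (hAB : (A, B) ≠ (0, 0))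
    (hpq : p + q ≠ 0) :
    (A * p + B * q = 0 ∧ A * q + B * p = 0) ↔ (A + B = 0 ∧ p = q) := by
  constructor
  · rintro ⟨h₁, h₂⟩
    have hsum : A + B = 0 := by
      have : (A + B) * (p + q) = 0 := by linear_combination h₁ + h₂
      exact (mul_eq_zero.1 this).resolve_right hpq
    have hA : A ≠ 0 := by
      rintro rfl
      exact hAB (by rw [show B = 0 by linarith])
    refine ⟨hsum, mul_left_cancel₀ hA ?_⟩
    linear_combination h₁ - q * hsum
  · rintro ⟨hsum, rfl⟩
    constructor <;> linear_combination p * hsum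

/-- Let `H₁ = !![a, b; c, d]` be unitary with columns `η_R = (a, c)ᵀ`
and `η_L = (b, d)ᵀ`, and let `A, B` be real numbers, not both zero.  Then
`diag(A, B)` swaps the lines spanned by `η_R` and `η_L` iff `A + B = 0` and `|a| = |b|`. -/
theorem conditionY1_swap_iff (a b c d : ℂ)
    (hH1 : !![a, b; c, d] ∈ Matrix.unitaryGroup (Fin 2) ℂ)
    (A B : ℝ) (hAB : (A, B) ≠ (0, 0)) :
    (∃ l l' : ℂ,
        (Matrix.diagonal ![(A : ℂ), (B : ℂ)]).mulVec ![a, c] = l • ![b, d] ∧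
        (Matrix.diagonal ![(A : ℂ), (B : ℂ)]).mulVec ![b, d] = l' • ![a, c]) ↔
    (A + B = 0 ∧ ‖a‖ = ‖b‖) := by
  obtain ⟨hc, hd⟩ := normSq_eq_of_mem_unitaryGroup_fin_two hH1
  have hab : normSq a + normSq b = 1 := by
    obtain ⟨h, -, -⟩ := mem_unitaryGroup_fin_two_iff.1 hH1
    simp only [mul_conj] at h
    exact_mod_cast h
  calc _ ↔ star ![a, c] ⬝ᵥ (diagonal ![(A : ℂ), (B : ℂ)] *ᵥ ![a, c]) = 0 ∧
        star ![b, d] ⬝ᵥ (diagonal ![(A : ℂ), (B : ℂ)] *ᵥ ![b, d]) = 0 := by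
        rw [← exists_smul_eq_iff_star_dotProduct_eq_zero hH1,
          ← exists_smul_eq_iff_star_dotProduct_eq_zero (swap_columns_mem_unitaryGroup hH1)]
        simp only [exists_and_left, exists_and_right]
    _ ↔ A * normSq a + B * normSq b = 0 ∧ A * normSq b + B * normSq a = 0 := by
        simp only [star_dotProduct_diagonal_mulVec_fin_two, hc, hd, ofReal_eq_zero]
    _ ↔ A + B = 0 ∧ normSq a = normSq b :=
        mul_add_mul_eq_zero_and_mul_add_mul_eq_zero_iff hAB (hab ▸ one_ne_zero)
    _ ↔ A + B = 0 ∧ ‖a‖ = ‖b‖ := by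
        rw [normSq_eq_norm_sq, normSq_eq_norm_sq, sq_eq_sq₀ (norm_nonneg _) (norm_nonneg _)]
end

section
/- Assume β_R ≠ 0 and β_L ≠ 0. Then Condition X₂ holds (that is, A'_j = 0 and B'_j = 0 for all j ∈ {2, 0, -2}) if and only if there exists j₀ ∈ {2, 0, -2} such that α_{2 j₀} = α_{(-2) j₀} = 0 and α_{0 j} = 0 for both j ≠ j₀ (so that H̃₂ has the zero-pattern of one of the three matrix shapes [p r 0; 0 0 t; q s 0], [p 0 r; 0 t 0; q 0 s], [0 p r; t 0 0; 0 q s] with respect to the ordering 2, 0, -2 of indices). -/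
/-!
Since `β_R, β_L ≠ 0`, condition `X₂` says that in every column `j` the middle entry `α_{0j}`
vanishes or both outer entries `α_{2j}, α_{(-2)j}` do. The middle row of a unitary matrix is a
unit vector, so some `α_{0j₀} ≠ 0`, forcing the outer entries of column `j₀` to vanish; that column
is then a multiple of a basis vector, and orthogonality of the columns kills `α_{0j}` for `j ≠ j₀`.
-/

open Matrix

section Unitary

variable {n K : Type*} [Fintype n] [DecidableEq n] [Field K] [StarRing K]

theorem exists_apply_ne_zero_of_mem_unitaryGroup {U : Matrix n n K}
    (hU : U ∈ unitaryGroup n K) (i : n) : ∃ j, U i j ≠ 0 := by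
  by_contra! hrow
  have hii := congrFun (congrFun (mem_unitaryGroup_iff.mp hU) i) i
  simp [mul_apply, hrow] at hii

theorem apply_eq_zero_of_mem_unitaryGroup_of_column_single {U : Matrix n n K}
    (hU : U ∈ unitaryGroup n K) {i j₀ : n} (hcol : ∀ k, k ≠ i → U k j₀ = 0)
    (hij₀ : U i j₀ ≠ 0) {j : n} (hj : j ≠ j₀) : U i j = 0 := by
  have horth := congrFun (congrFun (mem_unitaryGroup_iff'.mp hU) j₀) j
  rw [mul_apply, Finset.sum_eq_single i (fun k _ hk => by simp [hcol k hk]) (by simp),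
    one_apply_ne hj.symm, star_apply] at horth
  exact (mul_eq_zero.mp horth).resolve_left (star_ne_zero.mpr hij₀)

end Unitary

-- Rows and columns `0, 1, 2` stand for the indices `2, 0, -2`.
/-- With `H̃₂ = α` a `3 × 3` unitary matrix (rows/columns indexed by
`{2, 0, -2}` in this order, so index `0 ↦ 2`, `1 ↦ 0`, `2 ↦ -2`), `β_R ≠ 0` and
`β_L ≠ 0`, condition `X₂` (i.e. `A'_j = B'_j = 0` for all `j`, where
`A'_j = β_R·α_{2j}·conj(α_{0j}·β_L)` and `B'_j = β_R·α_{0j}·conj(α_{(-2)j}·β_L)`)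
holds iff there is a column `j₀` with `α_{2j₀} = α_{(-2)j₀} = 0` and `α_{0j} = 0` for
both `j ≠ j₀`; i.e. `H̃₂` has one of the zero patterns of the family `𝐇`. -/
theorem conditionX2_iff (α : Matrix (Fin 3) (Fin 3) ℂ)
    (hα : α ∈ Matrix.unitaryGroup (Fin 3) ℂ)
    (βR βL : ℂ) (hR : βR ≠ 0) (hL : βL ≠ 0) :
    (∀ j : Fin 3,
        βR * α 0 j * starRingEnd ℂ (α 1 j * βL) = 0 ∧
        βR * α 1 j * starRingEnd ℂ (α 2 j * βL) = 0) ↔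
    (∃ j₀ : Fin 3, α 0 j₀ = 0 ∧ α 2 j₀ = 0 ∧ ∀ j : Fin 3, j ≠ j₀ → α 1 j = 0) := by
  simp only [mul_eq_zero, map_mul, map_eq_zero, hR, hL, false_or, or_false]
  constructor
  · intro hX
    obtain ⟨j₀, hj₀⟩ := exists_apply_ne_zero_of_mem_unitaryGroup hα 1
    have h0 : α 0 j₀ = 0 := (hX j₀).1.resolve_right hj₀
    have h2 : α 2 j₀ = 0 := (hX j₀).2.resolve_left hj₀
    have hcol : ∀ k, k ≠ 1 → α k j₀ = 0 := by
      intro k hk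
      fin_cases k <;> simp_all
    exact ⟨j₀, h0, h2, fun j hj =>
      apply_eq_zero_of_mem_unitaryGroup_of_column_single hα hcol hj₀ hj⟩
  · rintro ⟨j₀, h0, h2, hrow⟩ j
    by_cases hj : j = j₀
    · subst hj
      exact ⟨Or.inl h0, Or.inr h2⟩
    · exact ⟨Or.inr (hrow j hj), Or.inl (hrow j hj)⟩
end

section
/- Let H₁ = !![a, b; c, d] be a 2×2 unitary complex matrix with columns η_R = (a, c)ᵀ and η_L = (b, d)ᵀ, and let A', B' be complex numbers with (A', B') ≠ (0, 0). Then there exist μ, μ' ∈ ℂ with diag(A', B')·η_R = μ·η_L and diag(A', B')·η_L = μ'·η_R if and only if A' + B' = 0 and |a| = |b|. -/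
/-!
The columns `η_R`, `η_L` of a unitary `2 × 2` matrix form an orthonormal basis, so `D η_R` lies on
the line `ℂ η_L` iff it is orthogonal to `η_R`, i.e. iff `A' |a|² + B' |c|² = 0`; likewise for
`η_L`. Unitarity gives `|c| = |b|`, `|d| = |a|` and `|a|² + |b|² = 1`, so the two conditions form
the linear system `A' x + B' y = 0 = A' y + B' x` in `x = |a|²`, `y = |b|²` with `x + y = 1`,
whose nontrivial solutions are exactly `A' + B' = 0`, `x = y`.
-/

open Complex Matrix

theorem Matrix.exists_eq_smul_col_iff_of_mem_unitaryGroup {n α : Type*} [Fintype n]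
    [DecidableEq n] [CommRing α] [StarRing α] {U : Matrix n n α} (hU : U ∈ unitaryGroup n α)
    (j : n) (v : n → α) : (∃ μ : α, v = μ • U.col j) ↔ ∀ k ≠ j, star (U.col k) ⬝ᵥ v = 0 := by
  have hcoord : ∀ k, star (U.col k) ⬝ᵥ v = (Uᴴ *ᵥ v) k := fun k => rfl
  constructor
  · rintro ⟨μ, rfl⟩ k hk
    have hUU : star (U.col k) ⬝ᵥ U.col j = (Uᴴ * U) k j := rfl
    rw [dotProduct_smul, hUU, ← star_eq_conjTranspose, mem_unitaryGroup_iff'.mp hU,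
      one_apply_ne hk, smul_zero]
  · intro h
    refine ⟨(Uᴴ *ᵥ v) j, ?_⟩
    have hsingle : Uᴴ *ᵥ v = Pi.single j ((Uᴴ *ᵥ v) j) := by
      ext k
      rcases eq_or_ne k j with rfl | hk
      · simp
      · rw [Pi.single_eq_of_ne hk, ← hcoord, h k hk]
    calc v = U *ᵥ (Uᴴ *ᵥ v) := by
          rw [mulVec_mulVec, ← star_eq_conjTranspose, mem_unitaryGroup_iff.mp hU, one_mulVec]
      _ = (Uᴴ *ᵥ v) j • U.col j := by
          rw [hsingle, mulVec_single, op_smul_eq_smul, Pi.single_eq_same]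

theorem Matrix.star_dotProduct_diagonal_mulVec {n : Type*} [Fintype n] [DecidableEq n]
    (x v : n → ℂ) : star v ⬝ᵥ diagonal x *ᵥ v = ∑ i, x i * normSq (v i) := by
  simp only [dotProduct, mulVec_diagonal, Pi.star_apply, normSq_eq_conj_mul_self]
  exact Finset.sum_congr rfl fun i _ => by simp only [RCLike.star_def]; ring

theorem Complex.normSq_of_mem_unitaryGroup_fin_two {a b c d : ℂ}
    (hU : !![a, b; c, d] ∈ unitaryGroup (Fin 2) ℂ) :
    normSq a + normSq b = 1 ∧ normSq c = normSq b ∧ normSq d = normSq a := by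
  have hrow := congr_fun (congr_fun (mem_unitaryGroup_iff.mp hU) 0) 0
  have hcol₀ := congr_fun (congr_fun (mem_unitaryGroup_iff'.mp hU) 0) 0
  have hcol₁ := congr_fun (congr_fun (mem_unitaryGroup_iff'.mp hU) 1) 1
  simp [mul_apply, Fin.sum_univ_two, mul_conj, ← normSq_eq_conj_mul_self] at hrow hcol₀ hcol₁
  norm_cast at hrow hcol₀ hcol₁
  exact ⟨hrow, by linarith, by linarith⟩

theorem mul_add_mul_eq_zero_and_swap_iff {K : Type*} [Field K] {A B x y : K} (hxy : x + y = 1)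
    (hAB : (A, B) ≠ (0, 0)) :
    (A * x + B * y = 0 ∧ A * y + B * x = 0) ↔ (A + B = 0 ∧ x = y) := by
  constructor
  · rintro ⟨h₁, h₂⟩
    have hsum : A + B = 0 := by linear_combination h₁ + h₂ - (A + B) * hxy
    have hA : A ≠ 0 := by
      rintro rfl
      exact hAB (by simpa using hsum)
    have hdiff : A * (x - y) = 0 := by linear_combination h₁ - y * hsum
    exact ⟨hsum, sub_eq_zero.mp ((mul_eq_zero.mp hdiff).resolve_left hA)⟩
  · rintro ⟨hsum, rfl⟩
    constructor <;> linear_combination x * hsum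

/-- Let `H₁ = !![a, b; c, d]` be unitary with columns `η_R = (a, c)ᵀ`
and `η_L = (b, d)ᵀ`, and let `A', B'` be complex numbers, not both zero.  Then
`diag(A', B')` swaps the lines spanned by `η_R` and `η_L` iff `A' + B' = 0` and
`|a| = |b|`. -/
theorem conditionY2_swap_iff (a b c d : ℂ)
    (hH1 : !![a, b; c, d] ∈ Matrix.unitaryGroup (Fin 2) ℂ)
    (A' B' : ℂ) (hAB : (A', B') ≠ (0, 0)) :
    (∃ μ μ' : ℂ,
        (Matrix.diagonal ![A', B']).mulVec ![a, c] = μ • ![b, d] ∧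
        (Matrix.diagonal ![A', B']).mulVec ![b, d] = μ' • ![a, c]) ↔
    (A' + B' = 0 ∧ ‖a‖ = ‖b‖) := by
  have hcol₀ : (!![a, b; c, d]).col 0 = ![a, c] := by ext i; fin_cases i <;> rfl
  have hcol₁ : (!![a, b; c, d]).col 1 = ![b, d] := by ext i; fin_cases i <;> rfl
  have hline₀ (v : Fin 2 → ℂ) : (∃ μ : ℂ, v = μ • ![a, c]) ↔ star ![b, d] ⬝ᵥ v = 0 := by
    simp [← hcol₀, ← hcol₁, exists_eq_smul_col_iff_of_mem_unitaryGroup hH1, Fin.forall_fin_two]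
  have hline₁ (v : Fin 2 → ℂ) : (∃ μ : ℂ, v = μ • ![b, d]) ↔ star ![a, c] ⬝ᵥ v = 0 := by
    simp [← hcol₀, ← hcol₁, exists_eq_smul_col_iff_of_mem_unitaryGroup hH1, Fin.forall_fin_two]
  obtain ⟨hab, hcb, hda⟩ := normSq_of_mem_unitaryGroup_fin_two hH1
  simp only [exists_and_left, exists_and_right, hline₀, hline₁, star_dotProduct_diagonal_mulVec,
    Fin.sum_univ_two, cons_val_zero, cons_val_one, hcb, hda]
  rw [mul_add_mul_eq_zero_and_swap_iff (by exact_mod_cast hab) hAB, ofReal_inj,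
    normSq_eq_norm_sq, normSq_eq_norm_sq, sq_eq_sq₀ (norm_nonneg a) (norm_nonneg b)]
end

section
/- Conditions X₁ and X₂ cannot hold simultaneously: there is no 3×3 unitary matrix H̃₂ and pair β_R, β_L ∈ ℂ with |β_R|² + |β_L|² = 1 such that A_j = B_j = 0 for all j ∈ {2, 0, -2} and A'_j = B'_j = 0 for all j ∈ {2, 0, -2}. -/
/-!
Write `A'_j = x * conj y` with `x = β_R α_{2j}` and `y = α_{0j} β_L`. Condition `A_j = 0` says
`‖x‖ = ‖y‖`, while `A'_j = 0` says that one of `x, y` vanishes; hence both do, for every `j`.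
So `β_R` annihilates the row `2` of `H̃₂` and `β_L` the row `0`. Rows of a unitary matrix have
unit length, which forces `β_R = β_L = 0`, contradicting `|β_R|² + |β_L|² = 1`.
-/

theorem eq_zero_and_eq_zero_of_mul_eq_zero_of_norm_eq {R : Type*} [NormedRing R]
    [NoZeroDivisors R] {x y : R} (h : x * y = 0) (hxy : ‖x‖ = ‖y‖) : x = 0 ∧ y = 0 := by
  rcases mul_eq_zero.mp h with hx | hy
  · exact ⟨hx, norm_eq_zero.mp (hxy ▸ norm_eq_zero.mpr hx)⟩
  · exact ⟨norm_eq_zero.mp (hxy.symm ▸ norm_eq_zero.mpr hy), hy⟩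

namespace Matrix

theorem eq_zero_of_mul_row_eq_zero_of_mem_unitaryGroup {n α : Type*} [Fintype n]
    [DecidableEq n] [CommRing α] [StarRing α] {U : Matrix n n α}
    (hU : U ∈ unitaryGroup n α) (i : n) {c : α} (hc : ∀ j, c * U i j = 0) : c = 0 := by
  have hrow : ∑ j, U i j * star (U i j) = 1 := by
    simpa [mul_apply, one_apply] using congrFun (congrFun (mem_unitaryGroup_iff.mp hU) i) i
  calc c = ∑ j, c * U i j * star (U i j) := by simp only [mul_assoc, ← Finset.mul_sum, hrow, mul_one]
    _ = 0 := by simp [hc]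

end Matrix

/-- Conditions `X₁` and `X₂` cannot hold simultaneously: there is no
`3 × 3` unitary `H̃₂ = α` (rows/columns indexed by `{2, 0, -2}` in this order, so index
`0 ↦ 2`, `1 ↦ 0`, `2 ↦ -2`) and `β_R, β_L` with `|β_R|² + |β_L|² = 1` such that
`A_j = B_j = 0` and `A'_j = B'_j = 0` for all `j ∈ {2, 0, -2}`. -/
theorem conditionX1_and_X2_impossible (α : Matrix (Fin 3) (Fin 3) ℂ)
    (hα : α ∈ Matrix.unitaryGroup (Fin 3) ℂ)
    (βR βL : ℂ) (hβ : ‖βR‖ ^ 2 + ‖βL‖ ^ 2 = 1) :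
    ¬ ((∀ j : Fin 3,
          ‖(α 0 j)‖ ^ 2 * ‖βR‖ ^ 2
            - ‖(α 1 j)‖ ^ 2 * ‖βL‖ ^ 2 = 0 ∧
          ‖(α 1 j)‖ ^ 2 * ‖βR‖ ^ 2
            - ‖(α 2 j)‖ ^ 2 * ‖βL‖ ^ 2 = 0) ∧
        (∀ j : Fin 3,
          βR * α 0 j * starRingEnd ℂ (α 1 j * βL) = 0 ∧
          βR * α 1 j * starRingEnd ℂ (α 2 j * βL) = 0)) := by
  rintro ⟨hA, hA'⟩
  have hvanish (j : Fin 3) : βR * α 0 j = 0 ∧ starRingEnd ℂ (α 1 j * βL) = 0 := by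
    refine eq_zero_and_eq_zero_of_mul_eq_zero_of_norm_eq (hA' j).1 ?_
    rw [Complex.norm_conj]
    refine (pow_left_inj₀ (norm_nonneg _) (norm_nonneg _) two_ne_zero).mp ?_
    simp only [norm_mul, mul_pow]
    linarith [(hA j).1]
  have hR : βR = 0 := Matrix.eq_zero_of_mul_row_eq_zero_of_mem_unitaryGroup hα 0 fun j =>
    (hvanish j).1
  have hL : βL = 0 := Matrix.eq_zero_of_mul_row_eq_zero_of_mem_unitaryGroup hα 1 fun j => by
    simpa [mul_comm] using (hvanish j).2
  simp [hR, hL] at hβ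
end

section
/- Conditions X₁ and Y₂ hold simultaneously if and only if all of the following hold: |a| = |b|; |β_R| = |β_L| = 1/√2; |α_{j k}| = 1/√3 for all j, k ∈ {2, 0, -2}; and for every j ∈ {2, 0, -2} the product α_{2 j}·α_{(-2) j}·conj(α_{0 j})² is a strictly negative real number (equivalently, arg α_{2 j} + arg α_{(-2) j} − 2·arg α_{0 j} is an odd multiple of π). -/
open Matrix ComplexConjugate
open scoped ComplexOrder

/-! The moduli `‖α i j‖²` of a unitary matrix form a doubly stochastic matrix, so summing
the balance equations of `X₁` along a row forces `|β_R| = |β_L|`, after which every column of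
`α` has equal moduli `1/√3`; in particular `A'_j ≠ 0`. For a unitary `H₁` and `p ≠ 0`,
orthogonality of the columns of `H₁` turns the swap condition of `Y₂` for `diag(p, q)` into
`p|a|² + q|b|² = p|b|² + q|a|² = 0`, i.e. `q = -p` and `|a| = |b|`. Finally
`A'_j + B'_j = β_R β̄_L (α_{2j} ᾱ_{0j} + α_{0j} ᾱ_{-2j})`, and when the moduli agree the
bracket vanishes exactly when `α_{2j} α_{-2j} ᾱ_{0j}²` is a negative real. -/

namespace Matrix

variable {𝕜 n : Type*} [RCLike 𝕜] [Fintype n] [DecidableEq n] {U : Matrix n n 𝕜}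

theorem sum_mul_conj_of_mem_unitaryGroup (hU : U ∈ unitaryGroup n 𝕜) (i i' : n) :
    ∑ k, U i k * conj (U i' k) = (1 : Matrix n n 𝕜) i i' := by
  simpa [mul_apply] using congrFun (congrFun (mem_unitaryGroup_iff.1 hU) i) i'

theorem sum_conj_mul_of_mem_unitaryGroup (hU : U ∈ unitaryGroup n 𝕜) (j j' : n) :
    ∑ k, conj (U k j) * U k j' = (1 : Matrix n n 𝕜) j j' := by
  simpa [mul_apply] using congrFun (congrFun (mem_unitaryGroup_iff'.1 hU) j) j'

theorem of_norm_sq_mem_doublyStochastic (hU : U ∈ unitaryGroup n 𝕜) :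
    of (fun i j ↦ ‖U i j‖ ^ 2) ∈ doublyStochastic ℝ n := by
  refine mem_doublyStochastic_iff_sum.2 ⟨fun _ _ ↦ sq_nonneg _, fun i ↦ ?_, fun j ↦ ?_⟩
  · have := sum_mul_conj_of_mem_unitaryGroup hU i i
    simp only [RCLike.mul_conj, one_apply_eq] at this
    exact_mod_cast this
  · have := sum_conj_mul_of_mem_unitaryGroup hU j j
    simp only [RCLike.conj_mul, one_apply_eq] at this
    exact_mod_cast this

theorem doublyStochastic_balanced_iff {P : Matrix (Fin 3) (Fin 3) ℝ}
    (hP : P ∈ doublyStochastic ℝ (Fin 3)) {r l : ℝ} (hrl : r + l = 1) :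
    (∀ j, P 0 j * r = P 1 j * l ∧ P 1 j * r = P 2 j * l) ↔
      r = 1 / 2 ∧ l = 1 / 2 ∧ ∀ i j, P i j = 1 / 3 := by
  have hrow i : P i 0 + P i 1 + P i 2 = 1 := by
    simpa [Fin.sum_univ_three] using sum_row_of_mem_doublyStochastic hP i
  have hcol j : P 0 j + P 1 j + P 2 j = 1 := by
    simpa [Fin.sum_univ_three] using sum_col_of_mem_doublyStochastic hP j
  constructor
  · intro h
    have hr : r = l := by
      linear_combination (h 0).1 + (h 1).1 + (h 2).1 - r * hrow 0 + l * hrow 1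
    have hr2 : r = 1 / 2 := by linarith
    refine ⟨hr2, by linarith, fun i j ↦ ?_⟩
    obtain ⟨h01, h12⟩ := h j
    rw [← hr, hr2] at h01 h12
    fin_cases i <;> simp only [Fin.zero_eta, Fin.mk_one, Fin.reduceFinMk] <;> linarith [hcol j]
  · rintro ⟨rfl, rfl, h⟩ j
    simp [h]

theorem diagonal_mulVec_fin_two_eq_smul_iff {R : Type*} [Semiring R] {p q x y u v μ : R} :
    diagonal ![p, q] *ᵥ ![x, y] = μ • ![u, v] ↔ p * x = μ * u ∧ q * y = μ * v := by
  simp [funext_iff, Fin.forall_fin_two]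

end Matrix

section UnitaryFinTwo

variable {a b c d : ℂ}

theorem norm_sq_add_norm_sq_of_unitary_fin_two (hU : !![a, b; c, d] ∈ unitaryGroup (Fin 2) ℂ) :
    ‖a‖ ^ 2 + ‖b‖ ^ 2 = 1 := by
  simpa [Fin.sum_univ_two] using
    sum_row_of_mem_doublyStochastic (of_norm_sq_mem_doublyStochastic hU) 0

theorem norm_eq_norm_of_unitary_fin_two (hU : !![a, b; c, d] ∈ unitaryGroup (Fin 2) ℂ) :
    ‖c‖ = ‖b‖ ∧ ‖d‖ = ‖a‖ := by
  have hP := of_norm_sq_mem_doublyStochastic hU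
  have row0 := sum_row_of_mem_doublyStochastic hP 0
  have row1 := sum_row_of_mem_doublyStochastic hP 1
  have col0 := sum_col_of_mem_doublyStochastic hP 0
  simp only [Fin.sum_univ_two, of_apply, cons_val_zero, cons_val_one, cons_val_fin_one]
    at row0 row1 col0
  constructor <;> rw [← sq_eq_sq₀ (norm_nonneg _) (norm_nonneg _)] <;> linarith

theorem mul_add_mul_eq_zero_of_unitary_fin_two (hU : !![a, b; c, d] ∈ unitaryGroup (Fin 2) ℂ)
    (hab : ‖a‖ = ‖b‖) : a * d + b * c = 0 := by
  obtain ⟨hcb, hda⟩ := norm_eq_norm_of_unitary_fin_two hU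
  have hc : c ≠ 0 := by
    have hsum := norm_sq_add_norm_sq_of_unitary_fin_two hU
    rintro rfl
    rw [hab, ← hcb, norm_zero] at hsum
    norm_num at hsum
  have horth : a * conj c + b * conj d = 0 := by
    simpa [Fin.sum_univ_two] using sum_mul_conj_of_mem_unitaryGroup hU 0 1
  -- `c̄ (a d + b c) = d (a c̄ + b d̄) + b (|c|² - |d|²)`
  have hcd : c * conj c = d * conj d := by
    simp only [Complex.mul_conj', hcb, hda, hab]
  have : conj c * (a * d + b * c) = 0 := by linear_combination d * horth + b * hcd
  exact (mul_eq_zero.1 this).resolve_left (by simpa using hc)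

theorem exists_diagonal_mulVec_swap_iff (hU : !![a, b; c, d] ∈ unitaryGroup (Fin 2) ℂ)
    {p : ℂ} (hp : p ≠ 0) (q : ℂ) :
    (∃ μ μ' : ℂ, diagonal ![p, q] *ᵥ ![a, c] = μ • ![b, d] ∧
      diagonal ![p, q] *ᵥ ![b, d] = μ' • ![a, c]) ↔ q = -p ∧ ‖a‖ = ‖b‖ := by
  simp only [diagonal_mulVec_fin_two_eq_smul_iff]
  obtain ⟨hcb, hda⟩ := norm_eq_norm_of_unitary_fin_two hU
  have hsum : (‖a‖ ^ 2 + ‖b‖ ^ 2 : ℂ) = 1 := by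
    exact_mod_cast norm_sq_add_norm_sq_of_unitary_fin_two hU
  constructor
  · rintro ⟨μ, μ', ⟨e1, e2⟩, e3, e4⟩
    have horth : conj a * b + conj c * d = 0 := by
      simpa [Fin.sum_univ_two] using sum_conj_mul_of_mem_unitaryGroup hU 0 1
    have horth' : conj b * a + conj d * c = 0 := by
      simpa [Fin.sum_univ_two] using sum_conj_mul_of_mem_unitaryGroup hU 1 0
    have E1 : p * ‖a‖ ^ 2 + q * ‖b‖ ^ 2 = 0 := by
      rw [← hcb]
      simp only [← Complex.conj_mul']
      linear_combination conj a * e1 + conj c * e2 + μ * horth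
    have E2 : p * ‖b‖ ^ 2 + q * ‖a‖ ^ 2 = 0 := by
      rw [← hda]
      simp only [← Complex.conj_mul']
      linear_combination conj b * e3 + conj d * e4 + μ' * horth'
    have hqp : q = -p := by linear_combination E1 + E2 - (p + q) * hsum
    refine ⟨hqp, ?_⟩
    have : (‖a‖ ^ 2 : ℂ) = ‖b‖ ^ 2 := by
      refine sub_eq_zero.1 ((mul_eq_zero.1 ?_).resolve_left hp)
      linear_combination E1 - ‖b‖ ^ 2 * hqp
    exact (sq_eq_sq₀ (norm_nonneg _) (norm_nonneg _)).1 (by exact_mod_cast this)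
  · rintro ⟨rfl, hab⟩
    have had := mul_add_mul_eq_zero_of_unitary_fin_two hU hab
    have ha : a ≠ 0 := by
      have hsum := norm_sq_add_norm_sq_of_unitary_fin_two hU
      rintro rfl
      rw [← hab, norm_zero] at hsum
      norm_num at hsum
    have hb : b ≠ 0 := norm_ne_zero_iff.1 (hab ▸ norm_ne_zero_iff.2 ha)
    refine ⟨p * a / b, p * b / a, ⟨by field_simp, ?_⟩, by field_simp, ?_⟩ <;>
      field_simp <;> linear_combination -had

end UnitaryFinTwo

theorem mul_conj_add_mul_conj_eq_zero_iff {x y z : ℂ} (hxz : ‖x‖ = ‖z‖) (hy : y ≠ 0)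
    (hz : z ≠ 0) :
    x * conj y + y * conj z = 0 ↔ x * z * conj y ^ 2 < 0 := by
  have key : (x * conj y + y * conj z) * (z * conj y) =
      x * z * conj y ^ 2 + ((‖y‖ * ‖z‖) ^ 2 : ℝ) := by
    push_cast
    rw [mul_pow, ← Complex.mul_conj', ← Complex.conj_mul']
    ring
  have hN : 0 < (‖y‖ * ‖z‖) ^ 2 := by positivity
  have hzy : z * conj y ≠ 0 := mul_ne_zero hz (by simpa using hy)
  constructor
  · intro h
    rw [h, zero_mul, eq_comm, ← eq_neg_iff_add_eq_zero] at key
    rw [key, neg_lt_zero]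
    exact_mod_cast hN
  · intro hw
    have hnorm : ‖x * z * conj y ^ 2‖ = (‖y‖ * ‖z‖) ^ 2 := by
      simp only [norm_mul, norm_pow, Complex.norm_conj, hxz]
      ring
    have : x * z * conj y ^ 2 = -((‖y‖ * ‖z‖) ^ 2 : ℝ) := by
      rw [← hnorm, ← norm_neg, ← Complex.eq_coe_norm_of_nonneg (neg_nonneg.2 hw.le), neg_neg]
    rw [this, neg_add_cancel] at key
    exact (mul_eq_zero.1 key).resolve_right hzy

theorem norm_eq_one_div_sqrt_iff {E : Type*} [SeminormedAddGroup E] (x : E) {r : ℝ}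
    (hr : 0 ≤ r) :
    ‖x‖ = 1 / √r ↔ ‖x‖ ^ 2 = 1 / r := by
  rw [← sq_eq_sq₀ (norm_nonneg x) (by positivity), div_pow, Real.sq_sqrt hr, one_pow]

/-- Conditions `X₁` and `Y₂` hold simultaneously iff `|a| = |b|`,
`|β_R| = |β_L| = 1/√2`, all entries of `H̃₂ = α` have modulus `1/√3`, and for every
column `j` the product `α_{2j}·α_{(-2)j}·conj(α_{0j})²` is a strictly negative real
number.  Rows/columns of `α` are indexed by `{2, 0, -2}` in this order
(index `0 ↦ 2`, `1 ↦ 0`, `2 ↦ -2`); `η_R = (a, c)ᵀ`, `η_L = (b, d)ᵀ` are the columns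
of the unitary matrix `H₁ = !![a, b; c, d]`. -/
theorem conditionX1_and_Y2_iff (a b c d : ℂ)
    (hH1 : !![a, b; c, d] ∈ Matrix.unitaryGroup (Fin 2) ℂ)
    (α : Matrix (Fin 3) (Fin 3) ℂ) (hα : α ∈ Matrix.unitaryGroup (Fin 3) ℂ)
    (βR βL : ℂ) (hβ : ‖βR‖ ^ 2 + ‖βL‖ ^ 2 = 1)
    (A B : Fin 3 → ℝ) (A' B' : Fin 3 → ℂ)
    (hA : ∀ j, A j = ‖(α 0 j)‖ ^ 2 * ‖βR‖ ^ 2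
        - ‖(α 1 j)‖ ^ 2 * ‖βL‖ ^ 2)
    (hB : ∀ j, B j = ‖(α 1 j)‖ ^ 2 * ‖βR‖ ^ 2
        - ‖(α 2 j)‖ ^ 2 * ‖βL‖ ^ 2)
    (hA' : ∀ j, A' j = βR * α 0 j * starRingEnd ℂ (α 1 j * βL))
    (hB' : ∀ j, B' j = βR * α 1 j * starRingEnd ℂ (α 2 j * βL)) :
    ((∀ j : Fin 3, A j = 0 ∧ B j = 0) ∧
      (∀ j : Fin 3, (A' j, B' j) ≠ (0, 0) ∧
        ∃ μ μ' : ℂ,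
          (Matrix.diagonal ![A' j, B' j]).mulVec ![a, c] = μ • ![b, d] ∧
          (Matrix.diagonal ![A' j, B' j]).mulVec ![b, d] = μ' • ![a, c])) ↔
    (‖a‖ = ‖b‖ ∧
      (‖βR‖ = 1 / Real.sqrt 2 ∧ ‖βL‖ = 1 / Real.sqrt 2) ∧
      (∀ j k : Fin 3, ‖(α j k)‖ = 1 / Real.sqrt 3) ∧
      (∀ j : Fin 3, (α 0 j * α 2 j * (starRingEnd ℂ (α 1 j)) ^ 2).im = 0 ∧
        (α 0 j * α 2 j * (starRingEnd ℂ (α 1 j)) ^ 2).re < 0)) := by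
  have hX : (∀ j, A j = 0 ∧ B j = 0) ↔
      ‖βR‖ ^ 2 = 1 / 2 ∧ ‖βL‖ ^ 2 = 1 / 2 ∧ ∀ i j, ‖α i j‖ ^ 2 = 1 / 3 := by
    simp only [hA, hB, sub_eq_zero]
    exact doublyStochastic_balanced_iff (of_norm_sq_mem_doublyStochastic hα) hβ
  have hcol (hR : ‖βR‖ ^ 2 = 1 / 2) (hL : ‖βL‖ ^ 2 = 1 / 2)
      (hα3 : ∀ i j, ‖α i j‖ ^ 2 = 1 / 3) (j : Fin 3) :
      A' j ≠ 0 ∧ (B' j = -A' j ↔ (α 0 j * α 2 j * conj (α 1 j) ^ 2).im = 0 ∧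
        (α 0 j * α 2 j * conj (α 1 j) ^ 2).re < 0) := by
    have hβR : βR ≠ 0 := by rintro rfl; norm_num at hR
    have hβL : conj βL ≠ 0 := by rw [map_ne_zero]; rintro rfl; norm_num at hL
    have hα0 i : α i j ≠ 0 := by intro h; have := hα3 i j; norm_num [h] at this
    have hsum :
        A' j + B' j = βR * conj βL * (α 0 j * conj (α 1 j) + α 1 j * conj (α 2 j)) := by
      simp only [hA', hB', map_mul]
      ring
    refine ⟨by simp [hA', hβR, hβL, hα0], ?_⟩
    rw [eq_neg_iff_add_eq_zero, add_comm, hsum, mul_eq_zero, or_iff_right (mul_ne_zero hβR hβL),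
      mul_conj_add_mul_conj_eq_zero_iff _ (hα0 1) (hα0 2), Complex.lt_def, Complex.zero_re,
      Complex.zero_im, and_comm]
    exact (sq_eq_sq₀ (norm_nonneg _) (norm_nonneg _)).1 (by rw [hα3, hα3])
  simp only [hX, norm_eq_one_div_sqrt_iff _ zero_le_two,
    norm_eq_one_div_sqrt_iff _ zero_le_three]
  constructor
  · rintro ⟨⟨hR, hL, hα3⟩, hY⟩
    have hc := hcol hR hL hα3
    have hY' j := (exists_diagonal_mulVec_swap_iff hH1 (hc j).1 (B' j)).1 (hY j).2
    exact ⟨(hY' 0).2, ⟨hR, hL⟩, hα3, fun j ↦ (hc j).2.1 (hY' j).1⟩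
  · rintro ⟨hab, ⟨hR, hL⟩, hα3, hphase⟩
    have hc := hcol hR hL hα3
    refine ⟨⟨hR, hL, hα3⟩, fun j ↦ ⟨by simp [(hc j).1], ?_⟩⟩
    exact (exists_diagonal_mulVec_swap_iff hH1 (hc j).1 (B' j)).2 ⟨(hc j).2.2 (hphase j), hab⟩
end

section
/- If for every j ∈ {2, 0, -2} and every ε ∈ {R, L} there exists κ ∈ ℂ with κ ≠ 0 such that κ⁻¹·Ṽ^{(j,ε)} is unitary, then H₁ ≠ I₂ and H̃₂ ≠ I₃. More precisely: if H₁ = I₂ then det Ṽ^{(j,R)} = 0 for every j ∈ {2, 0, -2}, and if H̃₂ = I₃ then det Ṽ^{(2,ε)} = 0 for every ε ∈ {R, L}; in either case the corresponding Ṽ is not a nonzero scalar multiple of a unitary matrix. -/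
namespace Matrix

theorem det_ne_zero_of_smul_mem_unitaryGroup {n α : Type*} [Fintype n] [DecidableEq n]
    [CommRing α] [StarRing α] [Nontrivial α] {V : Matrix n n α} {c : α}
    (h : c • V ∈ unitaryGroup n α) : V.det ≠ 0 := by
  intro hV
  simpa [det_smul, hV] using UnitaryGroup.det_isUnit ⟨_, h⟩

theorem det_fin_two_of_smul_smul {R : Type*} [CommRing R] (a b : R) (r : Fin 2 → R) :
    (of ![a • r, b • r]).det = 0 := by
  rw [det_fin_two]
  simp only [of_apply, cons_val_zero, cons_val_one, Pi.smul_apply, smul_eq_mul]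
  ring

end Matrix

open Matrix

theorem det_Vtilde_of_H1_eq_one {H1 : Matrix (Fin 2) (Fin 2) ℂ} (hH1 : H1 = 1)
    (α : Matrix (Fin 3) (Fin 3) ℂ) (βR βL : ℂ) (C1 : Matrix (Fin 2) (Fin 2) ℂ)
    (j : Fin 3) :
    (Vtilde H1 α βR βL C1 j 0).det = 0 := by
  have hη : (star fun i => H1 i 0) = Pi.single 0 1 := by
    subst hH1; ext i; fin_cases i <;> simp
  have hrow (d : Fin 2 → ℂ) : (star fun i => H1 i 0) ᵥ* (diagonal d * C1) = d 0 • C1 0 := by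
    rw [hη, ← vecMul_vecMul, single_vecMul_diagonal, one_mul, single_vecMul]; rfl
  simp only [Vtilde, hrow]
  exact det_fin_two_of_smul_smul _ _ _

theorem det_Vtilde_of_α_eq_one (H1 : Matrix (Fin 2) (Fin 2) ℂ) {α : Matrix (Fin 3) (Fin 3) ℂ}
    (hα : α = 1) (βR βL : ℂ) (C1 : Matrix (Fin 2) (Fin 2) ℂ) (ε : Fin 2) :
    (Vtilde H1 α βR βL C1 0 ε).det = 0 := by
  subst hα
  refine det_eq_zero_of_row_eq_zero 1 fun k => ?_
  have hzero : (![0, 0] : Fin 2 → ℂ) = 0 := by ext i; fin_cases i <;> rfl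
  simp [Vtilde, hzero]

theorem measurement_must_be_nontrivial_general (H1 : Matrix (Fin 2) (Fin 2) ℂ)
    (α : Matrix (Fin 3) (Fin 3) ℂ) (βR βL : ℂ) (C1 : Matrix (Fin 2) (Fin 2) ℂ) :
    ((∀ (j : Fin 3) (ε : Fin 2), ∃ κ : ℂ, κ ≠ 0 ∧
        κ⁻¹ • Vtilde H1 α βR βL C1 j ε ∈ Matrix.unitaryGroup (Fin 2) ℂ) →
      H1 ≠ 1 ∧ α ≠ 1) ∧
    (H1 = 1 → ∀ j : Fin 3,
      (Vtilde H1 α βR βL C1 j 0).det = 0 ∧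
      ¬ ∃ κ : ℂ, κ ≠ 0 ∧
          κ⁻¹ • Vtilde H1 α βR βL C1 j 0 ∈ Matrix.unitaryGroup (Fin 2) ℂ) ∧
    (α = 1 → ∀ ε : Fin 2,
      (Vtilde H1 α βR βL C1 0 ε).det = 0 ∧
      ¬ ∃ κ : ℂ, κ ≠ 0 ∧
          κ⁻¹ • Vtilde H1 α βR βL C1 0 ε ∈ Matrix.unitaryGroup (Fin 2) ℂ) := by
  have hdetR (hH1 : H1 = 1) (j : Fin 3) := det_Vtilde_of_H1_eq_one hH1 α βR βL C1 j
  have hdet2 (hα : α = 1) (ε : Fin 2) := det_Vtilde_of_α_eq_one H1 hα βR βL C1 ε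
  have not_scaled_unitary {V : Matrix (Fin 2) (Fin 2) ℂ} (hV : V.det = 0) :
      ¬ ∃ κ : ℂ, κ ≠ 0 ∧ κ⁻¹ • V ∈ unitaryGroup (Fin 2) ℂ :=
    fun ⟨_, _, hu⟩ => det_ne_zero_of_smul_mem_unitaryGroup hu hV
  refine ⟨fun hall => ⟨fun hH1 => ?_, fun hα => ?_⟩,
    fun hH1 j => ⟨hdetR hH1 j, not_scaled_unitary (hdetR hH1 j)⟩,
    fun hα ε => ⟨hdet2 hα ε, not_scaled_unitary (hdet2 hα ε)⟩⟩
  · exact not_scaled_unitary (hdetR hH1 0) (hall 0 0)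
  · exact not_scaled_unitary (hdet2 hα 0) (hall 0 0)

/-- If the teleportation is accomplished then `H₁ ≠ I₂` and
`H̃₂ ≠ I₃`.  More precisely, if `H₁ = I₂` then `det Ṽ^{(j,R)} = 0` for every `j`
(and `Ṽ^{(j,R)}` is not a nonzero scalar multiple of a unitary), and if `H̃₂ = I₃`
then `det Ṽ^{(2,ε)} = 0` for every `ε` (and `Ṽ^{(2,ε)}` is not a nonzero scalar
multiple of a unitary). -/
theorem measurement_must_be_nontrivial (H1 : Matrix (Fin 2) (Fin 2) ℂ)
    (hH1 : H1 ∈ Matrix.unitaryGroup (Fin 2) ℂ)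
    (α : Matrix (Fin 3) (Fin 3) ℂ) (hα : α ∈ Matrix.unitaryGroup (Fin 3) ℂ)
    (βR βL : ℂ) (hβ : ‖βR‖ ^ 2 + ‖βL‖ ^ 2 = 1)
    (C1 : Matrix (Fin 2) (Fin 2) ℂ) (hC1 : C1 ∈ Matrix.unitaryGroup (Fin 2) ℂ) :
    ((∀ (j : Fin 3) (ε : Fin 2), ∃ κ : ℂ, κ ≠ 0 ∧
        κ⁻¹ • Vtilde H1 α βR βL C1 j ε ∈ Matrix.unitaryGroup (Fin 2) ℂ) →
      H1 ≠ 1 ∧ α ≠ 1) ∧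
    (H1 = 1 → ∀ j : Fin 3,
      (Vtilde H1 α βR βL C1 j 0).det = 0 ∧
      ¬ ∃ κ : ℂ, κ ≠ 0 ∧
          κ⁻¹ • Vtilde H1 α βR βL C1 j 0 ∈ Matrix.unitaryGroup (Fin 2) ℂ) ∧
    (α = 1 → ∀ ε : Fin 2,
      (Vtilde H1 α βR βL C1 0 ε).det = 0 ∧
      ¬ ∃ κ : ℂ, κ ≠ 0 ∧
          κ⁻¹ • Vtilde H1 α βR βL C1 0 ε ∈ Matrix.unitaryGroup (Fin 2) ℂ) :=
  measurement_must_be_nontrivial_general H1 α βR βL C1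
end

section
/- For every j ∈ {2, 0, -2} and ε ∈ {R, L}, the rows v_R and v_L of Ṽ^{(j,ε)} satisfy: ⟨v_R, v_L⟩ = 0 if and only if ⟨η_ε, diag(A'_j, B'_j)·η_ε⟩ = 0, where A'_j = β_R·α_{2 j}·conj(α_{0 j}·β_L) and B'_j = β_R·α_{0 j}·conj(α_{(-2) j}·β_L). -/
/-!
Both rows of `Ṽ^{(j,ε)}` are `η_ε*·diag(·)` multiplied on the right by the unitary `C₁`, which
does not change their inner product; for diagonal matrices that inner product is
`⟨η_ε, diag(conj d · e) η_ε⟩`. Here it equals `conj β_R β_L · s`, while the right-hand side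
equals `β_R conj β_L · s`, with `s = ⟨η_ε, diag(α_{2j} conj α_{0j}, α_{0j} conj α_{(-2)j}) η_ε⟩`;
the two prefactors vanish together.
-/

open Matrix ComplexConjugate

section

variable {𝕜 n : Type*} [RCLike 𝕜] [Fintype n] [DecidableEq n]

theorem EuclideanSpace.inner_toLp_vecMul_of_mem_unitaryGroup {C : Matrix n n 𝕜}
    (hC : C ∈ unitaryGroup n 𝕜) (u w : n → 𝕜) :
    inner 𝕜 (WithLp.toLp 2 (u ᵥ* C) : EuclideanSpace 𝕜 n) (WithLp.toLp 2 (w ᵥ* C)) =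
      inner 𝕜 (WithLp.toLp 2 u : EuclideanSpace 𝕜 n) (WithLp.toLp 2 w) := by
  have hCC : C * Cᴴ = 1 := mem_unitaryGroup_iff.mp hC
  simp only [EuclideanSpace.inner_eq_star_dotProduct, star_vecMul]
  rw [← dotProduct_mulVec, mulVec_mulVec, hCC, one_mulVec]

theorem EuclideanSpace.inner_toLp_star_vecMul_diagonal (η d e : n → 𝕜) :
    inner 𝕜 (WithLp.toLp 2 (star η ᵥ* diagonal d) : EuclideanSpace 𝕜 n)
        (WithLp.toLp 2 (star η ᵥ* diagonal e)) =
      inner 𝕜 (WithLp.toLp 2 η : EuclideanSpace 𝕜 n)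
        (WithLp.toLp 2 (diagonal (star d * e) *ᵥ η)) := by
  simp only [EuclideanSpace.inner_eq_star_dotProduct, dotProduct, vecMul_diagonal,
    mulVec_diagonal, Pi.star_apply, Pi.mul_apply, star_mul', star_star]
  exact Finset.sum_congr rfl fun i _ => by ring

end

theorem conditionII_reduction_general (H1 : Matrix (Fin 2) (Fin 2) ℂ)
    (α : Matrix (Fin 3) (Fin 3) ℂ)
    (βR βL : ℂ)
    (C1 : Matrix (Fin 2) (Fin 2) ℂ) (hC1 : C1 ∈ Matrix.unitaryGroup (Fin 2) ℂ)
    (A' B' : Fin 3 → ℂ)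
    (hA' : ∀ j, A' j = βR * α 0 j * starRingEnd ℂ (α 1 j * βL))
    (hB' : ∀ j, B' j = βR * α 1 j * starRingEnd ℂ (α 2 j * βL)) :
    ∀ (j : Fin 3) (ε : Fin 2),
      @inner ℂ (EuclideanSpace ℂ (Fin 2)) _
          (WithLp.toLp 2 (Vtilde H1 α βR βL C1 j ε 0)) (WithLp.toLp 2 (Vtilde H1 α βR βL C1 j ε 1)) = 0 ↔
        @inner ℂ (EuclideanSpace ℂ (Fin 2)) _ (WithLp.toLp 2 (fun i => H1 i ε))
          (WithLp.toLp 2 ((Matrix.diagonal ![A' j, B' j]).mulVec (fun i => H1 i ε))) = 0 := by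
  intro j ε
  set η : Fin 2 → ℂ := fun i => H1 i ε
  set s : Fin 2 → ℂ := ![α 0 j * conj (α 1 j), α 1 j * conj (α 2 j)]
  have hV : inner ℂ (WithLp.toLp 2 (Vtilde H1 α βR βL C1 j ε 0) : EuclideanSpace ℂ (Fin 2))
      (WithLp.toLp 2 (Vtilde H1 α βR βL C1 j ε 1)) =
        inner ℂ (WithLp.toLp 2 η : EuclideanSpace ℂ (Fin 2))
          (WithLp.toLp 2 (diagonal ((conj βR * βL) • s) *ᵥ η)) := by
    change inner ℂ
      (WithLp.toLp 2 (star η ᵥ* (diagonal ![conj (α 0 j) * βR, conj (α 1 j) * βR] * C1)) :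
        EuclideanSpace ℂ (Fin 2))
      (WithLp.toLp 2 (star η ᵥ* (diagonal ![conj (α 1 j) * βL, conj (α 2 j) * βL] * C1))) = _
    rw [← vecMul_vecMul, ← vecMul_vecMul,
      EuclideanSpace.inner_toLp_vecMul_of_mem_unitaryGroup hC1,
      EuclideanSpace.inner_toLp_star_vecMul_diagonal]
    congr 4
    ext i
    fin_cases i <;> simp [s] <;> ring
  have hAB : ![A' j, B' j] = (βR * conj βL) • s := by
    ext i
    fin_cases i <;> simp [s, hA', hB'] <;> ring
  simp only [hV, hAB, diagonal_smul, Matrix.smul_mulVec, WithLp.toLp_smul, inner_smul_right,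
    mul_eq_zero, map_eq_zero]

/-- For every `j` and `ε`, the rows `v_R`, `v_L` of `Ṽ^{(j,ε)}`
satisfy `⟨v_R, v_L⟩ = 0` iff `⟨η_ε, diag(A'_j, B'_j)·η_ε⟩ = 0`, where
`A'_j = β_R·α_{2j}·conj(α_{0j}·β_L)` and `B'_j = β_R·α_{0j}·conj(α_{(-2)j}·β_L)`. -/
theorem conditionII_reduction (H1 : Matrix (Fin 2) (Fin 2) ℂ)
    (hH1 : H1 ∈ Matrix.unitaryGroup (Fin 2) ℂ)
    (α : Matrix (Fin 3) (Fin 3) ℂ) (hα : α ∈ Matrix.unitaryGroup (Fin 3) ℂ)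
    (βR βL : ℂ) (hβ : ‖βR‖ ^ 2 + ‖βL‖ ^ 2 = 1)
    (C1 : Matrix (Fin 2) (Fin 2) ℂ) (hC1 : C1 ∈ Matrix.unitaryGroup (Fin 2) ℂ)
    (A' B' : Fin 3 → ℂ)
    (hA' : ∀ j, A' j = βR * α 0 j * starRingEnd ℂ (α 1 j * βL))
    (hB' : ∀ j, B' j = βR * α 1 j * starRingEnd ℂ (α 2 j * βL)) :
    ∀ (j : Fin 3) (ε : Fin 2),
      @inner ℂ (EuclideanSpace ℂ (Fin 2)) _
          (WithLp.toLp 2 (Vtilde H1 α βR βL C1 j ε 0)) (WithLp.toLp 2 (Vtilde H1 α βR βL C1 j ε 1)) = 0 ↔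
        @inner ℂ (EuclideanSpace ℂ (Fin 2)) _ (WithLp.toLp 2 (fun i => H1 i ε))
          (WithLp.toLp 2 ((Matrix.diagonal ![A' j, B' j]).mulVec (fun i => H1 i ε))) = 0 :=
  conditionII_reduction_general H1 α βR βL C1 hC1 A' B' hA' hB'
end

section
/- Let H₁ = !![a, b; c, d] be a 2×2 unitary complex matrix with |a| = |b|, and set η_R = (a, c)ᵀ, η_L = (b, d)ᵀ (its columns). Then b ≠ 0, a ≠ 0, and for every A ∈ ℂ one has diag(A, −A)·η_R = (a/b)·A·η_L and diag(A, −A)·η_L = (b/a)·A·η_R. -/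
/-!
For a unitary `U = !![a, b; c, d]` one has `adjugate U = det U • star U`, so `d = det U * star a`
and `c = -det U * star b`, whence `a * d + b * c = det U * (|a|² - |b|²) = 0`. In the second
coordinate both claimed identities are exactly this relation; in the first they only need
`a, b ≠ 0`, which follows from `|a|² + |b|² = 1`.
-/

namespace Matrix

section

variable {n R : Type*} [Fintype n] [DecidableEq n] [CommRing R] [StarRing R]

theorem adjugate_eq_det_smul_star_of_mem_unitaryGroup {U : Matrix n n R}
    (hU : U ∈ unitaryGroup n R) : adjugate U = U.det • star U := by
  calc adjugate U = adjugate U * U * star U := by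
        rw [Matrix.mul_assoc, mem_unitaryGroup_iff.mp hU, Matrix.mul_one]
    _ = U.det • star U := by rw [adjugate_mul, smul_mul_assoc, Matrix.one_mul]

variable {a b c d : R}

theorem mul_star_add_mul_star_of_mem_unitaryGroup_fin_two
    (hU : !![a, b; c, d] ∈ unitaryGroup (Fin 2) R) : a * star a + b * star b = 1 := by
  simpa [mul_apply, Fin.sum_univ_two] using congr_fun₂ (mem_unitaryGroup_iff.mp hU) 0 0

theorem mul_add_mul_eq_of_mem_unitaryGroup_fin_two
    (hU : !![a, b; c, d] ∈ unitaryGroup (Fin 2) R) :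
    a * d + b * c = !![a, b; c, d].det * (a * star a - b * star b) := by
  have hadj := adjugate_eq_det_smul_star_of_mem_unitaryGroup hU
  rw [adjugate_fin_two_of] at hadj
  have hd : d = _ := congr_fun₂ hadj 0 0
  have hc : -c = _ := congr_fun₂ hadj 1 0
  simp only [of_apply, cons_val', cons_val_zero, cons_val_one, empty_val', cons_val_fin_one,
    smul_apply, star_apply, smul_eq_mul] at hd hc
  linear_combination a * hd - b * hc

end

theorem diagonal_mulVec_eq_smul_of_mul_add_mul_eq_zero {K : Type*} [Field K]
    {a b c d : K} (hb : b ≠ 0) (h : a * d + b * c = 0) (A : K) :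
    diagonal ![A, -A] *ᵥ ![a, c] = (a / b * A) • ![b, d] := by
  ext i
  fin_cases i
  · simp [field]
  · have hc : -A * c = a / b * A * d := by
      field_simp
      linear_combination -A * h
    simpa using hc

end Matrix

/-- If `H₁ = !![a, b; c, d]` is unitary with `|a| = |b|`, then
`a ≠ 0`, `b ≠ 0`, and for every `A ∈ ℂ` the matrix `diag(A, −A)` sends the column
`η_R = (a, c)ᵀ` to `(a/b)·A·η_L` and the column `η_L = (b, d)ᵀ` to `(b/a)·A·η_R`. -/
theorem diag_swaps_columns (a b c d : ℂ)
    (hH1 : !![a, b; c, d] ∈ Matrix.unitaryGroup (Fin 2) ℂ)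
    (hab : ‖a‖ = ‖b‖) :
    b ≠ 0 ∧ a ≠ 0 ∧ ∀ A : ℂ,
      (Matrix.diagonal ![A, -A]).mulVec ![a, c] = (a / b * A) • ![b, d] ∧
      (Matrix.diagonal ![A, -A]).mulVec ![b, d] = (b / a * A) • ![a, c] := by
  have hrow := Matrix.mul_star_add_mul_star_of_mem_unitaryGroup_fin_two hH1
  have hnorm : a * star a = b * star b := by
    simp only [Complex.star_def, Complex.mul_conj', hab]
  have ha : a ≠ 0 := by
    rintro rfl
    have hb : b = 0 := norm_eq_zero.mp (by simp [← hab])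
    simp [hb] at hrow
  have hb : b ≠ 0 := fun hb ↦ ha (norm_eq_zero.mp (by simp [hab, hb]))
  have hkey : a * d + b * c = 0 := by
    rw [Matrix.mul_add_mul_eq_of_mem_unitaryGroup_fin_two hH1, hnorm, sub_self, mul_zero]
  exact ⟨hb, ha, fun A ↦ ⟨Matrix.diagonal_mulVec_eq_smul_of_mul_add_mul_eq_zero hb hkey A,
    Matrix.diagonal_mulVec_eq_smul_of_mul_add_mul_eq_zero ha (by linear_combination hkey) A⟩⟩
end

section
/- Let H̃₂ be a 3×3 unitary complex matrix whose rows and columns are indexed by {2, 0, -2} in this order, with entries α_{j k}. If |α_{2 k}|²·|α_{(-2) k}|² = |α_{0 k}|⁴ for every column index k ∈ {2, 0, -2}, then |α_{j k}| = 1/√3 for all j, k ∈ {2, 0, -2}. -/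
/-!
Write `p j k = |α_{jk}|²`. Unitarity makes every column and every row of `p` sum to `1`.
The hypothesis says that `p 1 k` is the geometric mean of `p 0 k` and `p 2 k`, so by AM-GM
`2 p 1 k ≤ p 0 k + p 2 k = 1 - p 1 k`, i.e. `p 1 k ≤ 1/3`. The middle row sums to `1`, so
`p 1 k = 1/3` for all `k`; equality in AM-GM then forces `p 0 k = p 2 k = 1/3`.
-/

open Finset

namespace Matrix

variable {𝕜 n : Type*} [RCLike 𝕜] [Fintype n] [DecidableEq n] {U : Matrix n n 𝕜}

theorem sum_norm_sq_row_eq_one_of_mem_unitaryGroup (hU : U ∈ unitaryGroup n 𝕜) (i : n) :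
    ∑ j, ‖U i j‖ ^ 2 = 1 := by
  have h := congrFun₂ (mem_unitaryGroup_iff.mp hU) i i
  simp only [mul_apply, star_apply, RCLike.star_def, RCLike.mul_conj, one_apply_eq] at h
  exact_mod_cast h

theorem sum_norm_sq_col_eq_one_of_mem_unitaryGroup (hU : U ∈ unitaryGroup n 𝕜) (j : n) :
    ∑ i, ‖U i j‖ ^ 2 = 1 := by
  simpa [conjTranspose_apply] using
    sum_norm_sq_row_eq_one_of_mem_unitaryGroup (Unitary.star_mem hU) j

end Matrix

theorem eq_and_eq_of_sq_eq_mul_of_two_mul_eq_add {a b c : ℝ} (h : b ^ 2 = a * c)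
    (h2 : 2 * b = a + c) : a = b ∧ c = b := by
  have : (a - c) ^ 2 = 0 := by linear_combination 4 * h - (a + c + 2 * b) * h2
  have hac := sub_eq_zero.1 (pow_eq_zero_iff two_ne_zero |>.1 this)
  constructor <;> linarith

theorem eq_one_third_of_sum_eq_one_of_sq_eq_mul {p : Fin 3 → Fin 3 → ℝ} (hp : ∀ j k, 0 ≤ p j k)
    (hcol : ∀ k, ∑ j, p j k = 1) (hrow : ∑ k, p 1 k = 1)
    (hgm : ∀ k, p 1 k ^ 2 = p 0 k * p 2 k) (j k : Fin 3) : p j k = 1 / 3 := by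
  have hcol3 (k : Fin 3) : p 0 k + p 1 k + p 2 k = 1 := by
    simpa [Fin.sum_univ_three] using hcol k
  have hmid_le (k : Fin 3) : p 1 k ≤ 1 / 3 := by
    linarith [two_mul_le_add_of_sq_le_mul (hp 0 k) (hp 2 k) (hgm k).le, hcol3 k]
  have hmid (k : Fin 3) : p 1 k = 1 / 3 :=
    (sum_eq_sum_iff_of_le fun k _ ↦ hmid_le k).1 (by norm_num [hrow]) k (mem_univ k)
  obtain ⟨h0, h2⟩ :=
    eq_and_eq_of_sq_eq_mul_of_two_mul_eq_add (hgm k) (by linarith [hmid k, hcol3 k])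
  fin_cases j
  · exact h0.trans (hmid k)
  · exact hmid k
  · exact h2.trans (hmid k)

/-- Let `H̃₂ = α` be a `3 × 3` unitary matrix (rows/columns indexed
by `{2, 0, -2}` in this order, so index `0 ↦ 2`, `1 ↦ 0`, `2 ↦ -2`).  If
`|α_{2k}|²·|α_{(-2)k}|² = |α_{0k}|⁴` for every column `k`, then every entry of `H̃₂`
has modulus `1/√3`. -/
theorem unitary_with_det_condition_is_unbiased (α : Matrix (Fin 3) (Fin 3) ℂ)
    (hα : α ∈ Matrix.unitaryGroup (Fin 3) ℂ)
    (h : ∀ k : Fin 3,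
        ‖α 0 k‖ ^ 2 * ‖α 2 k‖ ^ 2 = ‖α 1 k‖ ^ 4) :
    ∀ j k : Fin 3, ‖α j k‖ = 1 / Real.sqrt 3 := by
  intro j k
  have hsq : ‖α j k‖ ^ 2 = 1 / 3 :=
    eq_one_third_of_sum_eq_one_of_sq_eq_mul (p := fun j k ↦ ‖α j k‖ ^ 2)
      (fun _ _ ↦ by positivity) (Matrix.sum_norm_sq_col_eq_one_of_mem_unitaryGroup hα)
      (Matrix.sum_norm_sq_row_eq_one_of_mem_unitaryGroup hα 1) (fun k ↦ by rw [h k]; ring) j k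
  rw [← Real.sqrt_sq (norm_nonneg _), hsq, one_div, Real.sqrt_inv, one_div]
end
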